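/- Fix M > 0 and ω > 0, and let Λ(r) = −ω/2 + (ω/2)(1 + 4M/(ωr³))^{−1/2} + (M/r³)(1 + 4M/(ωr³))^{−3/2} + (5M²/(2ωr⁶))(1 + 4M/(ωr³))^{−3/2}. Then r^{3/2}·Λ(r) → (5/16)√(ωM) as r → 0⁺; hence the Ricci scalar diverges like r^{−3/2} at the singularity r = 0. -/
import Mathlib


open Filter

/-- The Newman–Penrose Ricci scalar `Λ` of the KS spacetime, as a function of
the radius `r`, for fixed mass `M` and Hořava parameter `ω`. -/
noncomputable def KSLambda (M ω r : ℝ) : ℝ :=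
  -ω / 2 + (ω / 2) * (1 + 4 * M / (ω * r ^ 3)) ^ (-(1 / 2 : ℝ))
    + (M / r ^ 3) * (1 + 4 * M / (ω * r ^ 3)) ^ (-(3 / 2 : ℝ))
    + (5 * M ^ 2 / (2 * ω * r ^ 6)) * (1 + 4 * M / (ω * r ^ 3)) ^ (-(3 / 2 : ℝ))

/-- The same quantity multiplied by `r^{3/2}`, rewritten in a form that is
continuous at `r = 0`. -/
noncomputable def ksG (M ω : ℝ) (r : ℝ) : ℝ :=
  -ω / 2 * r ^ (3 / 2 : ℝ) + ω / 2 * (r ^ 3 + 4 * M / ω) ^ (-(1 / 2 : ℝ)) * r ^ 3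
    + M * (r ^ 3 + 4 * M / ω) ^ (-(3 / 2 : ℝ)) * r ^ 3
    + 5 * M ^ 2 / (2 * ω) * (r ^ 3 + 4 * M / ω) ^ (-(3 / 2 : ℝ))

lemma ksG_eq (M ω : ℝ) (hM : 0 < M) (hω : 0 < ω) (r : ℝ) (hr0 : 0 < r) :
    r ^ (3 / 2 : ℝ) * KSLambda M ω r = ksG M ω r := by
  have ha : 0 < 4 * M / ω := by positivity
  have hA : 0 < r ^ 3 + 4 * M / ω := by positivity
  have hsnn : (0:ℝ) ≤ r ^ (3/2 : ℝ) := Real.rpow_nonneg hr0.le _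
  have hs : ∀ n : ℕ, (r ^ (3/2 : ℝ)) ^ n = r ^ ((3:ℝ)/2 * n) := fun n => by
    rw [← Real.rpow_natCast (r ^ (3/2 : ℝ)) n, ← Real.rpow_mul hr0.le]
  have hs2 : (r ^ (3/2 : ℝ)) ^ 2 = r ^ 3 := by
    rw [hs 2, show (3:ℝ)/2 * (2:ℕ) = ((3:ℕ):ℝ) by norm_num, Real.rpow_natCast]
  have hs4 : (r ^ (3/2 : ℝ)) ^ 4 = r ^ 6 := by
    rw [hs 4, show (3:ℝ)/2 * (4:ℕ) = ((6:ℕ):ℝ) by norm_num, Real.rpow_natCast]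
  have hb : (1 + 4 * M / (ω * r ^ 3)) = (r ^ 3 + 4 * M / ω) / r ^ 3 := by
    field_simp
  have hr3 : ((r:ℝ) ^ 3) ^ (-(1/2 : ℝ)) = (r ^ (3/2 : ℝ))⁻¹ := by
    rw [← hs2, ← Real.rpow_natCast (r ^ (3/2:ℝ)) 2, ← Real.rpow_mul hsnn,
      show ((2:ℕ):ℝ) * (-(1/2)) = -1 by norm_num, Real.rpow_neg hsnn, Real.rpow_one]
  have hr3' : ((r:ℝ) ^ 3) ^ (-(3/2 : ℝ)) = ((r ^ (3/2 : ℝ)) ^ 3)⁻¹ := by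
    rw [← hs2, ← Real.rpow_natCast (r ^ (3/2:ℝ)) 2, ← Real.rpow_mul hsnn,
      show ((2:ℕ):ℝ) * (-(3/2)) = -((3:ℕ):ℝ) by norm_num, Real.rpow_neg hsnn,
      Real.rpow_natCast]
  have h1 : (1 + 4 * M / (ω * r ^ 3)) ^ (-(1/2 : ℝ))
      = (r ^ 3 + 4 * M / ω) ^ (-(1/2 : ℝ)) * r ^ (3/2 : ℝ) := by
    rw [hb, Real.div_rpow hA.le (by positivity), hr3, div_eq_mul_inv, inv_inv]
  have h2 : (1 + 4 * M / (ω * r ^ 3)) ^ (-(3/2 : ℝ))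
      = (r ^ 3 + 4 * M / ω) ^ (-(3/2 : ℝ)) * (r ^ (3/2 : ℝ)) ^ 3 := by
    rw [hb, Real.div_rpow hA.le (by positivity), hr3', div_eq_mul_inv, inv_inv]
  have hsne : r ^ (3/2 : ℝ) ≠ 0 := by positivity
  rw [KSLambda, ksG, h1, h2, ← hs2, ← hs4]
  field_simp

lemma ksG_tendsto (M ω : ℝ) (hM : 0 < M) (hω : 0 < ω) :
    Tendsto (ksG M ω) (nhdsWithin 0 (Set.Ioi 0)) (nhds ((5 / 16) * Real.sqrt (ω * M))) := by
  have ha : 0 < 4 * M / ω := by positivity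
  have hane : (0:ℝ) ^ 3 + 4 * M / ω ≠ 0 := by positivity
  have c1 : ContinuousAt (fun r : ℝ => r ^ (3/2 : ℝ)) 0 :=
    Real.continuousAt_rpow_const 0 _ (Or.inr (by norm_num))
  have cb : ContinuousAt (fun r : ℝ => r ^ 3 + 4 * M / ω) 0 := by fun_prop
  have c2 : ContinuousAt (fun r : ℝ => (r ^ 3 + 4 * M / ω) ^ (-(1/2 : ℝ))) 0 :=
    cb.rpow_const (Or.inl hane)
  have c3 : ContinuousAt (fun r : ℝ => (r ^ 3 + 4 * M / ω) ^ (-(3/2 : ℝ))) 0 :=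
    cb.rpow_const (Or.inl hane)
  have hcont : ContinuousAt (ksG M ω) 0 := by
    unfold ksG
    exact (((continuousAt_const.mul c1).add ((continuousAt_const.mul c2).mul (by fun_prop))).add
      ((continuousAt_const.mul c3).mul (by fun_prop))).add (continuousAt_const.mul c3)
  have hval : ksG M ω 0 = (5 / 16) * Real.sqrt (ω * M) := by
    have h0 : (0:ℝ) ^ (3/2 : ℝ) = 0 := Real.zero_rpow (by norm_num)
    have hsq : 0 < Real.sqrt ((4 * M / ω) ^ 3) := Real.sqrt_pos.mpr (by positivity)
    have e1 : ((0:ℝ) ^ 3 + 4 * M / ω) ^ (-(3/2 : ℝ)) = (Real.sqrt ((4 * M / ω) ^ 3))⁻¹ := by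
      rw [show (0:ℝ) ^ 3 + 4 * M / ω = 4 * M / ω by ring, Real.rpow_neg ha.le]
      congr 1
      rw [show (3/2 : ℝ) = ((3:ℕ):ℝ) * (1/2) by norm_num, Real.rpow_mul ha.le,
        Real.rpow_natCast, ← Real.sqrt_eq_rpow]
    have hkey : Real.sqrt (ω * M) * Real.sqrt ((4 * M / ω) ^ 3) = 8 * M ^ 2 / ω := by
      rw [← Real.sqrt_mul (by positivity)]
      rw [show ω * M * (4 * M / ω) ^ 3 = (8 * M ^ 2 / ω) ^ 2 by field_simp; ring]
      exact Real.sqrt_sq (by positivity)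
    have hsm : 0 < Real.sqrt (ω * M) := Real.sqrt_pos.mpr (by positivity)
    have hdiv : Real.sqrt ((4 * M / ω) ^ 3) = (8 * M ^ 2 / ω) / Real.sqrt (ω * M) := by
      rw [eq_div_iff hsm.ne']
      linarith [hkey]
    unfold ksG
    rw [h0, e1, hdiv]
    rw [inv_div]
    field_simp
    ring
  have h := hcont.continuousWithinAt (s := Set.Ioi (0:ℝ))
  rw [ContinuousWithinAt, hval] at h
  exact h

/-- For fixed `M > 0` and `ω > 0`, `r^{3/2} Λ(r) → (5/16)√(ωM)` as `r → 0⁺`: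
the Ricci scalar diverges like `r^{−3/2}` at the singularity. -/
theorem ks_lambda_divergence (M ω : ℝ) (hM : 0 < M) (hω : 0 < ω) :
    Tendsto (fun r : ℝ => r ^ (3 / 2 : ℝ) * KSLambda M ω r)
      (nhdsWithin 0 (Set.Ioi 0))
      (nhds ((5 / 16) * Real.sqrt (ω * M))) := by
  refine (ksG_tendsto M ω hM hω).congr' ?_
  exact eventually_nhdsWithin_of_forall fun r hr => (ksG_eq M ω hM hω r hr).symm
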